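/- In the Lie algebra 𝔢(1,1) with the covariant derivative given above, there is no null vector X ≠ 0 and constant k ∈ ℝ with ∇_X X = k·X. Consequently, the corresponding 3-dimensional Lie group with this left-invariant Lorentzian metric admits no light-like homogeneous geodesic through the identity. -/

import Mathlib

/-!
Write `X = (a, b, c)`. The geodesic equation `∇_X X = k X` reads
`2bc = ka`, `-(3/2)ac = kb`, `(1/2)ab = kc`; the combination `3a·(first) + 4b·(second)`
eliminates `abc` and leaves `k (3a² + 4b²) = 0`. A nonzero null vector has `a² + b² = c² > 0`,
so `k = 0`, and then `bc = ac = 0` with `c ≠ 0` forces `a = b = 0`, which is not null.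
-/

/-- The scalar product of signature `(+,+,−)` on `𝔢(1,1) ≃ ℝ³` in the basis `E₁,E₂,E₃`. -/
def formE16 (u v : ℝ × ℝ × ℝ) : ℝ := u.1 * v.1 + u.2.1 * v.2.1 - u.2.2 * v.2.2

/-- The Levi-Civita covariant derivative on the Lie algebra `𝔢(1,1)` in the basis
`E₁, E₂, E₃`, extended bilinearly from `∇_{E₁}E₂ = −(3/4)E₃`, `∇_{E₁}E₃ = −(3/4)E₂`,
`∇_{E₂}E₃ = (5/4)E₁`, `∇_{E₂}E₁ = (5/4)E₃`, `∇_{E₃}E₁ = −(3/4)E₂`, `∇_{E₃}E₂ = (3/4)E₁`,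
`∇_{Eᵢ}Eᵢ = 0`. -/
noncomputable def nablaE16 (X Y : ℝ × ℝ × ℝ) : ℝ × ℝ × ℝ :=
  ((5 / 4) * X.2.1 * Y.2.2 + (3 / 4) * X.2.2 * Y.2.1,
   -(3 / 4) * (X.1 * Y.2.2 + X.2.2 * Y.1),
   -(3 / 4) * X.1 * Y.2.1 + (5 / 4) * X.2.1 * Y.1)

section

variable {a b c k : ℝ}

theorem formE16_self (a b c : ℝ) : formE16 (a, b, c) (a, b, c) = a ^ 2 + b ^ 2 - c ^ 2 := by
  simp only [formE16]
  ring

theorem nablaE16_self (a b c : ℝ) :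
    nablaE16 (a, b, c) (a, b, c) = (2 * b * c, -(3 / 2) * a * c, (1 / 2) * a * b) := by
  simp only [nablaE16, Prod.mk.injEq]
  refine ⟨?_, ?_, ?_⟩ <;> ring

theorem time_ne_zero_of_null (h : formE16 (a, b, c) (a, b, c) = 0) (hne : (a, b, c) ≠ 0) :
    c ≠ 0 := by
  rintro rfl
  rw [formE16_self] at h
  have ha : a = 0 := by nlinarith [sq_nonneg a, sq_nonneg b]
  have hb : b = 0 := by nlinarith [sq_nonneg a, sq_nonneg b]
  simp [ha, hb] at hne

theorem spatial_ne_zero_of_null (h : formE16 (a, b, c) (a, b, c) = 0) (hne : (a, b, c) ≠ 0) :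
    a ≠ 0 ∨ b ≠ 0 := by
  by_contra! hab
  obtain ⟨rfl, rfl⟩ := hab
  have hc : c = 0 := by
    rw [formE16_self] at h
    nlinarith [sq_nonneg c]
  simp [hc] at hne

theorem eq_zero_of_nablaE16_self_eq_smul (h : nablaE16 (a, b, c) (a, b, c) = k • (a, b, c))
    (hab : a ≠ 0 ∨ b ≠ 0) : k = 0 := by
  simp only [nablaE16_self, Prod.smul_mk, smul_eq_mul, Prod.mk.injEq] at h
  obtain ⟨h₁, h₂, -⟩ := h
  have hk : k * (3 * a ^ 2 + 4 * b ^ 2) = 0 := by linear_combination -(3 * a * h₁ + 4 * b * h₂)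
  have hpos : 0 < 3 * a ^ 2 + 4 * b ^ 2 := by
    rcases hab with ha | hb <;> positivity
  exact (mul_eq_zero.mp hk).resolve_right hpos.ne'

theorem spatial_eq_zero_of_nablaE16_self_eq_zero (h : nablaE16 (a, b, c) (a, b, c) = 0)
    (hc : c ≠ 0) : a = 0 ∧ b = 0 := by
  simp only [nablaE16_self, Prod.mk_eq_zero] at h
  obtain ⟨h₁, h₂, -⟩ := h
  constructor
  · simpa [hc] using h₂
  · simpa [hc] using h₁

end

/-- In the Lie algebra `𝔢(1,1)` with the Lorentzian scalar product of
signature `(+,+,−)` and the Levi-Civita covariant derivative above, there is no nonzero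
null vector `X` and constant `k ∈ ℝ` with `∇_X X = k • X`. (Hence the corresponding
3-dimensional Lie group with this left-invariant Lorentzian metric admits no light-like
homogeneous geodesic through the identity.) -/
theorem no_lightlike_homogeneous_geodesic_on_e11 :
    ¬ ∃ (X : ℝ × ℝ × ℝ) (k : ℝ), formE16 X X = 0 ∧ X ≠ 0 ∧ nablaE16 X X = k • X := by
  rintro ⟨⟨a, b, c⟩, k, hnull, hne, hgeod⟩
  have hc := time_ne_zero_of_null hnull hne
  have hab := spatial_ne_zero_of_null hnull hne
  obtain rfl := eq_zero_of_nablaE16_self_eq_smul hgeod hab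
  obtain ⟨rfl, rfl⟩ := spatial_eq_zero_of_nablaE16_self_eq_zero (by simpa using hgeod) hc
  simp at hab
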